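/- Let G be a locally compact Hausdorff group acting properly on a locally compact Hausdorff space X, let Z ⊆ X be a topological fundamental domain for the action, and let β be a strongly continuous action of G by *-automorphisms on a C*-algebra B. Then the restriction map F ↦ F|_Z is a *-isomorphism from C₀(X×_G B) onto the C*-algebra of continuous functions f: Z → B that vanish at infinity and satisfy f(z) ∈ B^{G_z} for all z ∈ Z. -/

import Mathlib

/-!
Since `Z` meets every orbit exactly once, an equivariant `F` is determined by `F|_Z`, and
`f : Z → B` extends by `F (g • z) = g • f z`, which is well defined precisely because `f z` is
fixed by the stabilizer of `z`. Properness of the action and `Z ≅ G\X` make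
`(g, z) ↦ g • z : G × Z → X` a proper, hence quotient, map, so `F` is continuous because
`(g, z) ↦ g • f z` is. Both this joint continuity and the transfer of boundedness and vanishing
at infinity rest on `*`-automorphisms of a C*-algebra being isometric.
-/

/-- A continuous action of `G` on `X` is *proper* if the map
`G × X → X × X, (g,x) ↦ (g • x, x)` is proper, i.e. preimages of compact sets
are compact. -/
def ProperAction (G X : Type*) [SMul G X] [TopologicalSpace G]
    [TopologicalSpace X] : Prop :=
  ∀ K : Set (X × X), IsCompact K →
    IsCompact ((fun p : G × X => (p.1 • p.2, p.2)) ⁻¹' K)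

/-- The generalized fixed-point algebra `C₀(X ×_Γ B)`:  bounded continuous
functions `F : X → B` with `F (g • x) = g • F x`, such that the induced
function `‖F(·)‖` on the orbit space vanishes at infinity. -/
def IndAlg (Γ X B : Type*) [Group Γ] [TopologicalSpace X] [MulAction Γ X]
    [SMul Γ B] [TopologicalSpace B] [Norm B] : Set (X → B) :=
  {F | Continuous F ∧ (∀ (g : Γ) (x : X), F (g • x) = g • F x) ∧
    (∃ C : ℝ, ∀ x : X, ‖F x‖ ≤ C) ∧
    ∀ ε : ℝ, 0 < ε → ∃ K : Set (Quotient (MulAction.orbitRel Γ X)), IsCompact K ∧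
      ∀ x : X, Quotient.mk (MulAction.orbitRel Γ X) x ∉ K → ‖F x‖ < ε}


open Function Topology MulAction

theorem continuous_smul_of_norm_smul_eq {G B : Type*} [Monoid G] [TopologicalSpace G]
    [SeminormedAddCommGroup B] [DistribMulAction G B]
    (hnorm : ∀ (g : G) (b : B), ‖g • b‖ = ‖b‖)
    (hcont : ∀ b : B, Continuous fun g : G => g • b) :
    Continuous fun p : G × B => p.1 • p.2 := by
  refine continuous_iff_continuousAt.2 fun ⟨g₀, b₀⟩ => ?_
  rw [ContinuousAt, tendsto_iff_norm_sub_tendsto_zero]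
  have hbound : Continuous fun p : G × B => ‖p.2 - b₀‖ + ‖p.1 • b₀ - g₀ • b₀‖ := by fun_prop
  refine squeeze_zero (fun _ => norm_nonneg _) (fun p => ?_)
    (by simpa using hbound.tendsto (g₀, b₀))
  calc ‖p.1 • p.2 - g₀ • b₀‖
      ≤ ‖p.1 • p.2 - p.1 • b₀‖ + ‖p.1 • b₀ - g₀ • b₀‖ := norm_sub_le_norm_sub_add_norm_sub _ _ _
    _ = ‖p.2 - b₀‖ + ‖p.1 • b₀ - g₀ • b₀‖ := by rw [← smul_sub, hnorm]

theorem norm_smul_eq_of_smul_star {G B : Type*} [Group G] [NormedRing B] [StarRing B]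
    [CStarRing B] [NormedAlgebra ℂ B] [StarModule ℂ B] [CompleteSpace B]
    [MulSemiringAction G B] [SMulCommClass G ℂ B]
    (hstar : ∀ (g : G) (b : B), g • star b = star (g • b)) (g : G) (b : B) :
    ‖g • b‖ = ‖b‖ := by
  let _ : CStarAlgebra B := {}
  exact StarAlgEquiv.norm_map
    (StarAlgEquiv.ofAlgEquiv (MulSemiringAction.toAlgEquiv ℂ B g) (hstar g)) b

theorem exists_bound_of_forall_norm_lt {Y E : Type*} [TopologicalSpace Y]
    [SeminormedAddGroup E] {f : Y → E} (hf : Continuous f)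
    (hvan : ∀ ε : ℝ, 0 < ε → ∃ K : Set Y, IsCompact K ∧ ∀ y, y ∉ K → ‖f y‖ < ε) :
    ∃ C : ℝ, ∀ y, ‖f y‖ ≤ C := by
  obtain ⟨K, hK, hlt⟩ := hvan 1 one_pos
  obtain ⟨C, hC⟩ := hK.exists_bound_of_continuousOn hf.continuousOn
  refine ⟨max C 1, fun y => ?_⟩
  by_cases hy : y ∈ K
  · exact le_max_of_le_left (hC y hy)
  · exact le_max_of_le_right (hlt y hy).le

/-- The algebra `C₀(Z, B)` twisted by the stabilizers: `f z ∈ B^{G_z}` for all `z`. -/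
def StabFixedAlg (G : Type*) {X : Type*} [Group G] [TopologicalSpace X] [MulAction G X]
    (Z : Set X) (B : Type*) [SMul G B] [Norm B] [TopologicalSpace B] : Set (Z → B) :=
  {f | Continuous f ∧
    (∀ ε : ℝ, 0 < ε → ∃ K : Set Z, IsCompact K ∧ ∀ z : Z, z ∉ K → ‖f z‖ < ε) ∧
    ∀ z : Z, ∀ k ∈ stabilizer G (z : X), k • f z = f z}

section FundamentalDomain

variable {G X : Type*} [Group G] [MulAction G X] {Z : Set X}

theorem exists_smul_eq_of_surjective_orbitRel_mk
    (hZ : Surjective fun z : Z => Quotient.mk (orbitRel G X) (z : X)) (x : X) :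
    ∃ (g : G) (z : Z), g • (z : X) = x := by
  obtain ⟨z, hz⟩ := hZ (Quotient.mk _ x)
  obtain ⟨g, hg⟩ := Quotient.exact hz.symm
  exact ⟨g, z, hg⟩

theorem eq_of_smul_eq_smul_of_injective_orbitRel_mk
    (hZ : Injective fun z : Z => Quotient.mk (orbitRel G X) (z : X))
    {g g' : G} {z z' : Z} (h : g • (z : X) = g' • (z' : X)) : z = z' := by
  refine hZ (Quotient.sound ⟨g⁻¹ * g', ?_⟩)
  change (g⁻¹ * g') • (z' : X) = z
  rw [mul_smul, inv_smul_eq_iff, h]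

end FundamentalDomain

theorem isProperMap_smul_of_isHomeomorph {G X : Type*} [Group G] [TopologicalSpace G]
    [TopologicalSpace X] [T2Space X] [CompactlyCoherentSpace X] [MulAction G X]
    [ContinuousSMul G X] (hproper : ProperAction G X) {Z : Set X} (hZclosed : IsClosed Z)
    (hZ : IsHomeomorph fun z : Z => Quotient.mk (orbitRel G X) (z : X)) :
    IsProperMap fun p : G × Z => p.1 • (p.2 : X) := by
  have hcont : Continuous fun p : G × Z => p.1 • (p.2 : X) := by fun_prop
  refine isProperMap_iff_isCompact_preimage.2 ⟨hcont, fun V hV => ?_⟩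
  let e := hZ.homeomorph
  -- if `g • z ∈ V` then `z = e⁻¹ [g • z]` lies in the compact set `W`
  set W : Set X := Subtype.val '' ((fun x => e.symm (Quotient.mk _ x)) '' V)
  have hW : IsCompact W :=
    (hV.image (e.symm.continuous.comp continuous_quotient_mk')).image continuous_subtype_val
  have hι : IsClosedEmbedding (Prod.map id Subtype.val : G × Z → G × X) :=
    IsClosedEmbedding.id.prodMap hZclosed.isClosedEmbedding_subtypeVal
  refine (hι.isCompact_preimage (hproper _ (hV.prod hW))).of_isClosed_subset
    (hV.isClosed.preimage hcont) fun p hp => ⟨hp, ?_⟩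
  refine ⟨p.2, ⟨p.1 • p.2, hp, ?_⟩, rfl⟩
  exact e.symm_apply_eq.2 (Quotient.sound ⟨p.1, rfl⟩)

section Equivariant

variable {G X B : Type*} [Group G] [MulAction G X] {Z : Set X}

theorem eq_of_eqOn_of_smul_eq [SMul G B]
    (hZ : Surjective fun z : Z => Quotient.mk (orbitRel G X) (z : X)) {F₁ F₂ : X → B}
    (h₁ : ∀ (g : G) (x : X), F₁ (g • x) = g • F₁ x)
    (h₂ : ∀ (g : G) (x : X), F₂ (g • x) = g • F₂ x) (h : Set.EqOn F₁ F₂ Z) : F₁ = F₂ := by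
  funext x
  obtain ⟨g, z, rfl⟩ := exists_smul_eq_of_surjective_orbitRel_mk hZ x
  rw [h₁, h₂, h z.2]

theorem exists_forall_smul_eq_smul [Zero B] [MulAction G B]
    (hZ : Injective fun z : Z => Quotient.mk (orbitRel G X) (z : X)) {f : Z → B}
    (hf : ∀ z : Z, ∀ k ∈ stabilizer G (z : X), k • f z = f z) :
    ∃ F : X → B, ∀ (g : G) (z : Z), F (g • (z : X)) = g • f z := by
  refine ⟨extend (fun p : G × Z => p.1 • (p.2 : X)) (fun p => p.1 • f p.2) 0,
    fun g z => ?_⟩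
  refine FactorsThrough.extend_apply (fun ⟨g, z⟩ ⟨g', z'⟩ h => ?_) (0 : X → B) (g, z)
  obtain rfl := eq_of_smul_eq_smul_of_injective_orbitRel_mk hZ h
  have hk : g'⁻¹ * g ∈ stabilizer G (z : X) := by
    rw [mem_stabilizer_iff, mul_smul, inv_smul_eq_iff]
    exact h
  calc g • f z = g' • (g'⁻¹ * g) • f z := by rw [smul_smul, mul_inv_cancel_left]
    _ = g' • f z := by rw [hf z _ hk]

end Equivariant

section Restriction

variable {G X B : Type*} [Group G] [TopologicalSpace X] [MulAction G X] {Z : Set X}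

theorem restrict_mem_stabFixedAlg [SMul G B] [Norm B] [TopologicalSpace B]
    (hZ : IsHomeomorph fun z : Z => Quotient.mk (orbitRel G X) (z : X)) {F : X → B}
    (hF : F ∈ IndAlg G X B) : (fun z : Z => F z) ∈ StabFixedAlg G Z B := by
  obtain ⟨hFc, hFeq, -, hFvan⟩ := hF
  refine ⟨hFc.comp continuous_subtype_val, fun ε hε => ?_, fun z k hk => ?_⟩
  · obtain ⟨K, hK, hlt⟩ := hFvan ε hε
    exact ⟨hZ.homeomorph ⁻¹' K, hZ.homeomorph.isCompact_preimage.2 hK, fun z hz => hlt z hz⟩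
  · rw [← hFeq, mem_stabilizer_iff.1 hk]

theorem exists_mem_indAlg_restrict_eq [TopologicalSpace G] [T2Space X]
    [CompactlyCoherentSpace X] [ContinuousSMul G X] [SeminormedAddCommGroup B]
    [DistribMulAction G B] [ContinuousSMul G B] (hproper : ProperAction G X)
    (hZclosed : IsClosed Z) (hZ : IsHomeomorph fun z : Z => Quotient.mk (orbitRel G X) (z : X))
    (hnorm : ∀ (g : G) (b : B), ‖g • b‖ = ‖b‖) {f : Z → B} (hf : f ∈ StabFixedAlg G Z B) :
    ∃ F ∈ IndAlg G X B, (fun z : Z => F z) = f := by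
  obtain ⟨hfc, hfvan, hfstab⟩ := hf
  obtain ⟨F, hF⟩ := exists_forall_smul_eq_smul hZ.injective hfstab
  have hsurj := exists_smul_eq_of_surjective_orbitRel_mk hZ.surjective
  have hquot : IsQuotientMap fun p : G × Z => p.1 • (p.2 : X) :=
    (isProperMap_smul_of_isHomeomorph hproper hZclosed hZ).isClosedMap.isQuotientMap
      (by fun_prop) fun x => by simpa using hsurj x
  obtain ⟨C, hC⟩ := exists_bound_of_forall_norm_lt hfc hfvan
  refine ⟨F, ⟨?_, fun g x => ?_, ⟨C, fun x => ?_⟩, fun ε hε => ?_⟩, funext fun z => ?_⟩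
  · refine hquot.continuous_iff.2 ?_
    simpa only [comp_def, hF] using (by fun_prop : Continuous fun p : G × Z => p.1 • f p.2)
  · obtain ⟨h, z, rfl⟩ := hsurj x
    rw [smul_smul, hF, hF, mul_smul]
  · obtain ⟨g, z, rfl⟩ := hsurj x
    rw [hF, hnorm]
    exact hC z
  · obtain ⟨K, hK, hlt⟩ := hfvan ε hε
    refine ⟨hZ.homeomorph '' K, hK.image (Homeomorph.continuous _), fun x hx => ?_⟩
    obtain ⟨g, z, rfl⟩ := hsurj x
    rw [hF, hnorm]
    exact hlt z fun hz => hx ⟨z, hz, Quotient.sound ⟨g⁻¹, inv_smul_smul g _⟩⟩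
  · simpa using hF 1 z

end Restriction

theorem restriction_to_fundamental_domain_iso_general
    (G : Type*) [Group G] [TopologicalSpace G]
    (X : Type*) [TopologicalSpace X] [LocallyCompactSpace X] [T2Space X]
    [MulAction G X] [ContinuousSMul G X] (hproper : ProperAction G X)
    (Z : Set X) (hZclosed : IsClosed Z)
    (hZfund : IsHomeomorph fun z : ↥Z =>
      Quotient.mk (MulAction.orbitRel G X) (z : X))
    (B : Type*) [NormedRing B] [StarRing B] [CStarRing B] [NormedAlgebra ℂ B]
    [StarModule ℂ B] [CompleteSpace B]
    [MulSemiringAction G B] [SMulCommClass G ℂ B]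
    (hstar : ∀ (g : G) (b : B), g • (star b) = star (g • b))
    (hcont : ∀ b : B, Continuous fun g : G => g • b) :
    Set.BijOn (fun F : X → B => fun z : ↥Z => F (z : X)) (IndAlg G X B)
      {f : ↥Z → B | Continuous f ∧
        (∀ ε : ℝ, 0 < ε → ∃ K : Set ↥Z, IsCompact K ∧
          ∀ z : ↥Z, z ∉ K → ‖f z‖ < ε) ∧
        ∀ z : ↥Z, ∀ k ∈ MulAction.stabilizer G (z : X), k • f z = f z} := by
  have hnorm := norm_smul_eq_of_smul_star hstar
  have : ContinuousSMul G B := ⟨continuous_smul_of_norm_smul_eq hnorm hcont⟩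
  refine ⟨fun F hF => restrict_mem_stabFixedAlg hZfund hF, fun F₁ hF₁ F₂ hF₂ h => ?_,
    fun f hf => exists_mem_indAlg_restrict_eq hproper hZclosed hZfund hnorm hf⟩
  exact eq_of_eqOn_of_smul_eq hZfund.surjective hF₁.2.1 hF₂.2.1 fun x hx => congrFun h ⟨x, hx⟩

/-- Let `G` be a locally compact Hausdorff group acting properly on a locally
compact Hausdorff space `X`, let `Z ⊆ X` be a topological fundamental domain
for the action (a closed subset such that `z ↦ G • z` is a homeomorphism onto
the orbit space), and let `β` be a strongly continuous action of `G` by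
`*`-automorphisms on a C*-algebra `B`.  Then the restriction map `F ↦ F|_Z`
is a `*`-isomorphism (a bijection; the operations are pointwise) from
`C₀(X ×_G B)` onto the C*-algebra of continuous functions `f : Z → B` that
vanish at infinity and satisfy `f z ∈ B^{G_z}` for all `z ∈ Z`. -/
theorem restriction_to_fundamental_domain_iso
    (G : Type*) [Group G] [TopologicalSpace G] [IsTopologicalGroup G]
    [LocallyCompactSpace G] [T2Space G]
    (X : Type*) [TopologicalSpace X] [LocallyCompactSpace X] [T2Space X]
    [MulAction G X] [ContinuousSMul G X] (hproper : ProperAction G X)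
    (Z : Set X) (hZclosed : IsClosed Z)
    (hZfund : IsHomeomorph fun z : ↥Z =>
      Quotient.mk (MulAction.orbitRel G X) (z : X))
    (B : Type*) [NormedRing B] [StarRing B] [CStarRing B] [NormedAlgebra ℂ B]
    [StarModule ℂ B] [CompleteSpace B]
    [MulSemiringAction G B] [SMulCommClass G ℂ B]
    (hstar : ∀ (g : G) (b : B), g • (star b) = star (g • b))
    (hcont : ∀ b : B, Continuous fun g : G => g • b) :
    Set.BijOn (fun F : X → B => fun z : ↥Z => F (z : X)) (IndAlg G X B)
      {f : ↥Z → B | Continuous f ∧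
        (∀ ε : ℝ, 0 < ε → ∃ K : Set ↥Z, IsCompact K ∧
          ∀ z : ↥Z, z ∉ K → ‖f z‖ < ε) ∧
        ∀ z : ↥Z, ∀ k ∈ MulAction.stabilizer G (z : X), k • f z = f z} :=
  restriction_to_fundamental_domain_iso_general G X hproper Z hZclosed hZfund B hstar hcont
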